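/- Every nonempty rich word w can be extended on the right: there exists a letter x such that wx is rich. -/

import Mathlib

/-!
Appending a letter to a word creates at most one new palindromic factor, namely its longest
palindromic suffix (every shorter palindromic suffix is also a prefix of it, so it occurred
before); hence a word is rich iff each prefix gains one. Write `w = c :: v`, let `p` be the
longest palindromic suffix of the rich word `v` and `z` the letter preceding `p` in `w`. Then
`z p z` is a palindromic suffix of `w z`, and it is new: an occurrence of `z p z` in `w` would
place an occurrence of `p z` inside `v`, whereas in a rich word the longest palindromic suffix is
the new palindrome of the last step and so occurs nowhere else.
-/

def Rich {A : Type*} (w : List A) : Prop :=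
  {p : List A | p.reverse = p ∧ p <:+: w}.ncard = w.length + 1

namespace List

variable {A : Type*} {l m : List A} {a b : A}

theorem IsInfix.of_cons_cons (h : a :: l <:+: b :: m) : l <:+: m := by
  rcases infix_cons_iff.1 h with h | h
  · exact (cons_prefix_cons.1 h).2.isInfix
  · exact (suffix_cons a l).isInfix.trans h

theorem IsInfix.of_append_singleton (h : l ++ [a] <:+: m ++ [b]) : l <:+: m := by
  rw [← reverse_infix, reverse_concat, reverse_concat] at h
  exact reverse_infix.1 h.of_cons_cons

theorem IsSuffix.isPrefix_of_reverse_eq (h : l <:+ m) (hl : l.reverse = l)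
    (hm : m.reverse = m) : l <+: m := by
  rwa [← reverse_suffix, hl, hm]

end List

open List

section

variable {A : Type*}

def palFactors (w : List A) : Set (List A) := {p | p.reverse = p ∧ p <:+: w}

theorem rich_iff {w : List A} : Rich w ↔ (palFactors w).ncard = w.length + 1 := Iff.rfl

theorem palFactors_finite (w : List A) : (palFactors w).Finite :=
  w.sublists.finite_toSet.subset fun _ hp => mem_sublists.2 hp.2.sublist

theorem palFactors_reverse (w : List A) : palFactors w.reverse = palFactors w := by
  ext p
  refine and_congr_right fun hp => ?_
  rw [← reverse_infix, reverse_reverse, hp]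

theorem rich_reverse_iff {w : List A} : Rich w.reverse ↔ Rich w := by
  rw [rich_iff, rich_iff, palFactors_reverse, length_reverse]

theorem isSuffix_of_mem_palFactors_append_singleton {u p : List A} {a : A}
    (hp : p ∈ palFactors (u ++ [a])) (hpu : p ∉ palFactors u) : p <:+ u ++ [a] :=
  (infix_concat_iff.1 hp.2).resolve_right fun h => hpu ⟨hp.1, h⟩

theorem isInfix_of_isSuffix_of_palindrome {p q u : List A} {a : A} (hp : p.reverse = p)
    (hq : q.reverse = q) (hpq : p <:+ q) (hlt : p.length < q.length) (hqu : q <:+ u ++ [a]) :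
    p <:+: u := by
  obtain ⟨r, rfl⟩ := hpq.isPrefix_of_reverse_eq hp hq
  obtain ⟨x, r, rfl⟩ := exists_cons_of_length_pos (by simpa using hlt)
  have : p ++ [x] <+: p ++ x :: r := ⟨r, by simp⟩
  exact (this.isInfix.trans hqu.isInfix).of_append_singleton

theorem eq_of_mem_palFactors_append_singleton {u p q : List A} {a : A}
    (hp : p ∈ palFactors (u ++ [a]) \ palFactors u)
    (hq : q ∈ palFactors (u ++ [a]) \ palFactors u) : p = q := by
  wlog hle : p.length ≤ q.length generalizing p q
  · exact (this hq hp (by omega)).symm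
  have hps := isSuffix_of_mem_palFactors_append_singleton hp.1 hp.2
  have hqs := isSuffix_of_mem_palFactors_append_singleton hq.1 hq.2
  have hpq : p <:+ q := suffix_of_suffix_length_le hps hqs hle
  by_contra hne
  have hlt : p.length < q.length := lt_of_le_of_ne hle fun h => hne (hpq.eq_of_length h)
  exact hp.2 ⟨hp.1.1, isInfix_of_isSuffix_of_palindrome hp.1.1 hq.1.1 hpq hlt hqs⟩

theorem ncard_palFactors_append_singleton_le (u : List A) (a : A) :
    (palFactors (u ++ [a])).ncard ≤ (palFactors u).ncard + 1 := by
  have hnew : (palFactors (u ++ [a]) \ palFactors u).ncard ≤ 1 :=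
    (Set.ncard_le_one ((palFactors_finite _).sdiff)).2 fun _ hp _ hq =>
      eq_of_mem_palFactors_append_singleton hp hq
  have := Set.ncard_le_ncard_sdiff_add_ncard (palFactors (u ++ [a])) _ (palFactors_finite u)
  omega

theorem ncard_palFactors_le (w : List A) : (palFactors w).ncard ≤ w.length + 1 := by
  induction w using reverseRecOn with
  | nil =>
    refine (Set.ncard_le_one (palFactors_finite _)).2 fun p hp q hq => ?_
    rw [infix_nil.1 hp.2, infix_nil.1 hq.2]
  | append_singleton u a ih =>
    have := ncard_palFactors_append_singleton_le u a
    simp only [length_append, length_singleton]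
    omega

theorem Rich.of_append_singleton {u : List A} {a : A} (h : Rich (u ++ [a])) : Rich u := by
  rw [rich_iff, length_append, length_singleton] at h
  have := ncard_palFactors_append_singleton_le u a
  have := ncard_palFactors_le u
  rw [rich_iff]
  omega

theorem Rich.of_cons {u : List A} {a : A} (h : Rich (a :: u)) : Rich u := by
  rw [← rich_reverse_iff, reverse_cons] at h
  exact rich_reverse_iff.1 h.of_append_singleton

theorem Rich.exists_mem_palFactors_append_singleton {u : List A} {a : A}
    (h : Rich (u ++ [a])) : ∃ n ∈ palFactors (u ++ [a]), n ∉ palFactors u := by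
  refine Set.exists_mem_notMem_of_ncard_lt_ncard ?_ (palFactors_finite u)
  rw [rich_iff, length_append, length_singleton] at h
  have := ncard_palFactors_le u
  omega

theorem Rich.append_singleton_of_mem {w q : List A} {x : A} (hw : Rich w)
    (hq : q ∈ palFactors (w ++ [x])) (hqw : q ∉ palFactors w) : Rich (w ++ [x]) := by
  have hsub : insert q (palFactors w) ⊆ palFactors (w ++ [x]) :=
    Set.insert_subset hq fun p hp => ⟨hp.1, hp.2.trans infix_append_left⟩
  have hge := Set.ncard_le_ncard hsub (palFactors_finite _)
  have hle := ncard_palFactors_append_singleton_le w x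
  rw [Set.ncard_insert_of_notMem hqw (palFactors_finite w)] at hge
  rw [rich_iff] at hw ⊢
  simp only [length_append, length_singleton]
  omega

structure IsLongestPalSuffix (p w : List A) : Prop where
  reverse_eq : p.reverse = p
  isSuffix : p <:+ w
  length_le : ∀ q : List A, q.reverse = q → q <:+ w → q.length ≤ p.length

theorem exists_isLongestPalSuffix (w : List A) : ∃ p, IsLongestPalSuffix p w := by
  have hfin : {p : List A | p.reverse = p ∧ p <:+ w}.Finite :=
    (palFactors_finite w).subset fun _ hp => ⟨hp.1, hp.2.isInfix⟩
  obtain ⟨p, ⟨hp, hpw⟩, hmax⟩ := Set.exists_max_image _ length hfin ⟨[], rfl, nil_suffix⟩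
  exact ⟨p, hp, hpw, fun q hq hqw => hmax q ⟨hq, hqw⟩⟩

theorem Rich.not_isInfix_append_singleton {v p : List A} (hv : Rich v)
    (hp : IsLongestPalSuffix p v) (b : A) : ¬ p ++ [b] <:+: v := by
  intro hpb
  rcases eq_nil_or_concat' v with rfl | ⟨u, a, rfl⟩
  · simpa using hpb.length_le
  obtain ⟨n, hn, hnu⟩ := hv.exists_mem_palFactors_append_singleton
  have hns := isSuffix_of_mem_palFactors_append_singleton hn hnu
  have hnp : n <:+ p := suffix_of_suffix_length_le hns hp.isSuffix (hp.length_le n hn.1 hns)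
  exact hnu ⟨hn.1, (hnp.isPrefix_of_reverse_eq hn.1 hp.reverse_eq).isInfix.trans
    hpb.of_append_singleton⟩

end

theorem stmt6_general {A : Type*} (w : List A) (hw : Rich w) (hne : w ≠ []) :
    ∃ x : A, Rich (w ++ [x]) := by
  obtain ⟨c, v, rfl⟩ := exists_cons_of_ne_nil hne
  obtain ⟨p, hp⟩ := exists_isLongestPalSuffix v
  obtain ⟨r, rfl⟩ := hp.isSuffix
  obtain ⟨s, z, hsz⟩ := (eq_nil_or_concat' (c :: r)).resolve_left (cons_ne_nil c r)
  have hw' : c :: (r ++ p) = s ++ z :: p := by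
    rw [← cons_append, hsz, append_assoc, singleton_append]
  have hzpz : z :: (p ++ [z]) ∈ palFactors (c :: (r ++ p) ++ [z]) :=
    ⟨by simp [hp.reverse_eq], s, [], by simp [hw']⟩
  refine ⟨z, hw.append_singleton_of_mem hzpz fun hzpz' => ?_⟩
  exact hw.of_cons.not_isInfix_append_singleton hp z hzpz'.2.of_cons_cons

theorem stmt6 {A : Type*} [Fintype A] (w : List A) (hw : Rich w) (hne : w ≠ []) :
    ∃ x : A, Rich (w ++ [x]) :=
  stmt6_general w hw hne
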